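/- Fix a vertex v ∈ V and assume b ≥ 2. The following m + n points all belong to the 1-DCNDP polytope P₁, all satisfy y_v = 1, and form an affinely independent family: (i) for each edge f ∈ E, the point (𝟙 − e_f, e_v + e_{p(f)}), where p(f) is a chosen endpoint of f with p(f) ≠ v; (ii) for each vertex w ∈ V with w ≠ v, the point (𝟙, e_v + e_w); and (iii) the point (𝟙, e_v). -/
import Mathlib


open Finset

/-- The 1-DCNDP polytope `P₁ ⊆ ℝ^E × ℝ^V`. -/
def dcndpP1 {V : Type*} [Fintype V] [DecidableEq V] (G : SimpleGraph V) [DecidableRel G.Adj]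
    (b : ℝ) : Set ((G.edgeSet → ℝ) × (V → ℝ)) :=
  {p | (∀ e, 0 ≤ p.1 e) ∧ (∀ v, 0 ≤ p.2 v ∧ p.2 v ≤ 1) ∧
    (∀ u v, ∀ h : G.Adj u v, 1 - p.2 u - p.2 v ≤ p.1 ⟨s(u, v), h⟩) ∧
    (∑ v, p.2 v ≤ b)}

/-- Fix a vertex `v` and assume `b ≥ 2`. The `m + n` points `(𝟙 - e_f, e_v + e_{p f})` for
each edge `f` (with `p f` an endpoint of `f` different from `v`), `(𝟙, e_v + e_w)` for each
vertex `w ≠ v`, and `(𝟙, e_v)`, all belong to `P₁`, all satisfy `y_v = 1`, and form an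
affinely independent family. -/
theorem dcndpP1_y_le_one_face_affineIndependent_points {V : Type*} [Fintype V] [DecidableEq V]
    (G : SimpleGraph V) [DecidableRel G.Adj] (b : ℝ) (hb : 2 ≤ b) (v : V)
    (p : G.edgeSet → V)
    (hp : ∀ f : G.edgeSet, p f ∈ (f : Sym2 V) ∧ p f ≠ v) :
    let pts : Option (G.edgeSet ⊕ {w : V // w ≠ v}) → (G.edgeSet → ℝ) × (V → ℝ) := fun i =>
      match i with
      | none => (fun _ => 1, fun w => if w = v then 1 else 0)
      | some (Sum.inl f) =>
          (fun e => if e = f then 0 else 1,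
           fun w => (if w = v then 1 else 0) + (if w = p f then 1 else 0))
      | some (Sum.inr w) =>
          (fun _ => 1,
           fun z => (if z = v then 1 else 0) + (if z = (w : V) then 1 else 0))
    (∀ i, pts i ∈ dcndpP1 G b) ∧ (∀ i, (pts i).2 v = 1) ∧ AffineIndependent ℝ pts := by
  intro pts
  have hone : (1:ℝ) ≤ b := le_trans (by norm_num) hb
  have hsum1 : ∀ a : V, ∑ w, (if w = a then (1:ℝ) else 0) = 1 := by
    intro a; simp
  refine ⟨?_, ?_, ?_⟩
  · rintro (_ | (f | w))
    · refine ⟨fun e => by norm_num, fun u => ?_, fun u u' h => ?_, ?_⟩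
      · by_cases hu : u = v <;> simp [pts, hu]
      · simp only [pts]
        have h1 : (0:ℝ) ≤ if u = v then 1 else 0 := by positivity
        have h2 : (0:ℝ) ≤ if u' = v then 1 else 0 := by positivity
        linarith
      · simpa [pts, hsum1] using hone
    · obtain ⟨hmem, hne⟩ := hp f
      refine ⟨fun e => by simp only [pts]; split <;> norm_num,
        fun u => ?_, fun u u' h => ?_, ?_⟩
      · by_cases h1 : u = v <;> by_cases h2 : u = p f <;>
          simp_all [pts, h1, h2] <;> norm_num
      · simp only [pts]
        have h1 : (0:ℝ) ≤ if u = v then 1 else 0 := by positivity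
        have h2 : (0:ℝ) ≤ if u' = v then 1 else 0 := by positivity
        have h3 : (0:ℝ) ≤ if u = p f then 1 else 0 := by positivity
        have h4 : (0:ℝ) ≤ if u' = p f then 1 else 0 := by positivity
        by_cases heq : (⟨s(u, u'), h⟩ : G.edgeSet) = f
        · rw [if_pos heq]
          have hfe : s(u, u') = (f : Sym2 V) := congrArg Subtype.val heq
          have hm : p f ∈ s(u, u') := by rw [hfe]; exact hmem
          rw [Sym2.mem_iff] at hm
          rcases hm with h5 | h5
          · have : (if u = p f then (1:ℝ) else 0) = 1 := by simp [h5]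
            linarith
          · have : (if u' = p f then (1:ℝ) else 0) = 1 := by simp [h5]
            linarith
        · rw [if_neg heq]
          linarith
      · have hs2 : ∑ w : V, ((if w = v then (1:ℝ) else 0) + (if w = p f then 1 else 0)) = 2 := by
          rw [Finset.sum_add_distrib, hsum1, hsum1]; norm_num
        show ∑ w : V, _ ≤ b
        simp only [pts]
        rw [hs2]; exact hb
    · refine ⟨fun e => by norm_num, fun u => ?_, fun u u' h => ?_, ?_⟩
      · have := w.2
        by_cases h1 : u = v <;> by_cases h2 : u = (w : V) <;> simp_all [pts, h1, h2]
      · simp only [pts]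
        have h1 : (0:ℝ) ≤ if u = v then 1 else 0 := by positivity
        have h2 : (0:ℝ) ≤ if u' = v then 1 else 0 := by positivity
        have h3 : (0:ℝ) ≤ if u = (w:V) then 1 else 0 := by positivity
        have h4 : (0:ℝ) ≤ if u' = (w:V) then 1 else 0 := by positivity
        linarith
      · have hs2 : ∑ z : V, ((if z = v then (1:ℝ) else 0) + (if z = (w:V) then 1 else 0)) = 2 := by
          rw [Finset.sum_add_distrib, hsum1, hsum1]; norm_num
        show ∑ z : V, _ ≤ b
        simp only [pts]
        rw [hs2]; exact hb
  · rintro (_ | (f | w))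
    · simp [pts]
    · have := (hp f).2
      simp [pts, (Ne.symm this)]
    · have := w.2
      simp [pts, (Ne.symm this)]
  · rw [affineIndependent_iff]
    intro s w hw0 hwp
    have h1 : ∀ f : G.edgeSet, ∑ i ∈ s, w i * (pts i).1 f = 0 := by
      intro f
      have := congrArg (fun q => q.1 f) hwp
      simpa [Prod.fst_sum, Finset.sum_apply] using this
    have h2 : ∀ z : V, ∑ i ∈ s, w i * (pts i).2 z = 0 := by
      intro z
      have := congrArg (fun q => q.2 z) hwp
      simpa [Prod.snd_sum, Finset.sum_apply] using this
    have hE : ∀ f : G.edgeSet, some (Sum.inl f) ∈ s → w (some (Sum.inl f)) = 0 := by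
      intro f hf
      have key : ∀ i : Option (G.edgeSet ⊕ {w : V // w ≠ v}),
          (pts i).1 f = 1 - (if i = some (Sum.inl f) then 1 else 0) := by
        rintro (_ | (f' | w'))
        · simp [pts]
        · by_cases h : f' = f
          · subst h; simp [pts]
          · have h' : f ≠ f' := fun hh => h hh.symm
            simp [pts, h, h']
        · simp [pts]
      have h1f := h1 f
      have hcong : ∑ i ∈ s, w i * (pts i).1 f
          = ∑ i ∈ s, (w i - (if i = some (Sum.inl f) then w i else 0)) :=
        Finset.sum_congr rfl (fun i _ => by rw [key i]; split <;> ring)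
      rw [hcong, Finset.sum_sub_distrib, hw0, zero_sub, neg_eq_zero,
        Finset.sum_ite_eq' s (some (Sum.inl f)) w, if_pos hf] at h1f
      exact h1f
    have hW : ∀ z : {w : V // w ≠ v}, some (Sum.inr z) ∈ s → w (some (Sum.inr z)) = 0 := by
      intro z hz
      have h2z := h2 (z : V)
      rw [Finset.sum_eq_single_of_mem (some (Sum.inr z)) hz ?_] at h2z
      · simpa [pts, z.2] using h2z
      · rintro (_ | (f' | w')) hi hne
        · simp [pts, z.2]
        · by_cases h : (z : V) = p f'
          · have := hE f' hi
            simp [pts, this]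
          · simp [pts, z.2, h]
        · have hzw : (z : V) ≠ (w' : V) := by
            intro hc
            exact hne (by rw [Subtype.ext hc.symm])
          simp [pts, z.2, hzw]
    have hN : none ∈ s → w none = 0 := by
      intro hn
      have : ∑ i ∈ s, w i = w none := by
        rw [Finset.sum_eq_single_of_mem none hn ?_]
        rintro (_ | (f' | w')) hi hne
        · exact absurd rfl hne
        · exact hE f' hi
        · exact hW w' hi
      rw [hw0] at this; exact this.symm
    rintro (_ | (f | z)) hi
    · exact hN hi
    · exact hE f hi
    · exact hW z hi
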